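/- arXiv:2002.08419 — 2 statements merged into one kernel-verified Lean document; each statement's English description precedes it below -/
import Mathlib

section
/- (Theorem 1, queue mean-rate stability.) Let K ≥ 1, and for each slot t ∈ ℕ and i ∈ {1,…,K} let q_i(t) ≥ 0 denote E[Q_i(t)], let s_i(t) ≥ q_i(t)² denote E[Q_i(t)²], let p(t) = E[P(t)], and set l(t) = (1/2)·Σ_{i=1}^K s_i(t). Suppose there exist constants B > 0, ε > 0, V > 0, P*, and P_min with p(t) ≥ P_min for all t, and the per-slot bound l(t+1) − l(t) + V·p(t) ≤ B + V·P* − ε·Σ_{i=1}^K q_i(t) holds for all t. Then every queue is mean-rate stable: for each i, lim_{T→∞} q_i(T)/T = 0. -/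
open Finset Filter

/-- Theorem 1 (queue mean-rate stability). -/
theorem mean_rate_stability
    (K : ℕ) (hK : 1 ≤ K)
    (q s : ℕ → Fin K → ℝ) (p l : ℕ → ℝ)
    (hq : ∀ t i, 0 ≤ q t i)
    (hs : ∀ t i, (q t i) ^ 2 ≤ s t i)
    (hl : ∀ t, l t = (1 / 2) * ∑ i, s t i)
    (B ε V Pstar Pmin : ℝ) (hB : 0 < B) (hε : 0 < ε) (hV : 0 < V)
    (hp : ∀ t, Pmin ≤ p t)
    (hdrift : ∀ t : ℕ, l (t + 1) - l t + V * p t ≤ B + V * Pstar - ε * ∑ i, q t i) :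
    ∀ i : Fin K, Tendsto (fun T : ℕ => q T i / T) atTop (nhds 0) := by
  set C : ℝ := B + V * (Pstar - Pmin) with hC
  have hs0 : ∀ t i, (0:ℝ) ≤ s t i := fun t i => le_trans (sq_nonneg _) (hs t i)
  have hl0 : ∀ t, 0 ≤ l t := by
    intro t
    rw [hl t]
    exact mul_nonneg (by norm_num) (Finset.sum_nonneg fun i _ => hs0 t i)
  have hstep : ∀ t, l (t + 1) ≤ l t + C := by
    intro t
    have h1 := hdrift t
    have h2 : 0 ≤ ε * ∑ i, q t i := by
      apply mul_nonneg hε.le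
      exact Finset.sum_nonneg fun i _ => hq t i
    have h3 : V * Pmin ≤ V * p t := mul_le_mul_of_nonneg_left (hp t) hV.le
    nlinarith
  have hlin : ∀ T : ℕ, l T ≤ l 0 + T * C := by
    intro T
    induction T with
    | zero => simp
    | succ n ih =>
      have := hstep n
      push_cast
      nlinarith
  set a : ℝ := 2 * l 0 with ha
  set b : ℝ := 2 * max C 0 with hb
  have ha0 : 0 ≤ a := by have := hl0 0; linarith
  have hb0 : 0 ≤ b := mul_nonneg (by norm_num) (le_max_right _ _)
  have hbound : ∀ (T : ℕ) (i : Fin K), q T i ≤ Real.sqrt (a + b * T) := by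
    intro T i
    have hqs : (q T i) ^ 2 ≤ 2 * l T := by
      have h1 : s T i ≤ ∑ j, s T j :=
        Finset.single_le_sum (fun j _ => hs0 T j) (Finset.mem_univ i)
      have := hs T i
      rw [hl T] at *
      linarith
    have h2 : (q T i) ^ 2 ≤ a + b * T := by
      have := hlin T
      have hCmax : C ≤ max C 0 := le_max_left _ _
      have hT0 : (0:ℝ) ≤ (T:ℝ) := Nat.cast_nonneg T
      nlinarith
    calc q T i = Real.sqrt ((q T i)^2) := by rw [Real.sqrt_sq (hq T i)]
      _ ≤ Real.sqrt (a + b * T) := Real.sqrt_le_sqrt h2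
  intro i
  have hupper : Tendsto (fun T : ℕ => Real.sqrt (a + b * T) / T) atTop (nhds 0) := by
    have h1 : Tendsto (fun T : ℕ => (a + b * T) / (T:ℝ)^2) atTop (nhds 0) := by
      have ha' : Tendsto (fun T : ℕ => a / (T:ℝ)^2) atTop (nhds 0) := by
        apply Tendsto.div_atTop tendsto_const_nhds
        exact (tendsto_pow_atTop (by norm_num : (2:ℕ) ≠ 0)).comp tendsto_natCast_atTop_atTop
      have hb' : Tendsto (fun T : ℕ => b * T / (T:ℝ)^2) atTop (nhds 0) := by
        have : Tendsto (fun T : ℕ => b / (T:ℝ)) atTop (nhds 0) :=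
          Tendsto.div_atTop tendsto_const_nhds tendsto_natCast_atTop_atTop
        apply this.congr'
        filter_upwards [eventually_ge_atTop 1] with T hT
        have hT0 : (T:ℝ) ≠ 0 := Nat.cast_ne_zero.mpr (Nat.one_le_iff_ne_zero.mp hT)
        field_simp
      have := ha'.add hb'
      simpa [add_div] using this
    have h2 := (Real.continuous_sqrt.tendsto 0).comp h1
    refine Tendsto.congr' ?_ (by simpa [Function.comp] using h2)
    filter_upwards [eventually_ge_atTop 1] with T hT
    have hT0 : (0:ℝ) < (T:ℝ) := by exact_mod_cast hT
    have hab : (0:ℝ) ≤ a + b * T := by positivity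
    simp only [Function.comp_apply]
    rw [Real.sqrt_div hab, Real.sqrt_sq hT0.le]
  apply squeeze_zero' ?_ ?_ hupper
  · filter_upwards with T
    exact div_nonneg (hq T i) (Nat.cast_nonneg T)
  · filter_upwards [eventually_ge_atTop 1] with T hT
    have hT0 : (0:ℝ) < (T:ℝ) := by exact_mod_cast hT
    exact div_le_div_of_nonneg_right (hbound T i) hT0.le
end

section
/- (Scalar core of Proposition 1: rate–WMMSE equivalence.) Let c ∈ ℂ, let p ≥ 0, let I ≥ 0 and n > 0 be real numbers, set D = |c|²·p + I + n and SINR = |c|²·p/(I + n), and define e(u) = D·|u|² − 2·√p·Re(u·c) + 1 for u ∈ ℂ. Then the infimum over u ∈ ℂ and w > 0 of w·e(u) − log w equals 1 − log(1 + SINR), and it is attained at u* = √p·conj(c)/D and w* = 1/e(u*). -/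
set_option maxHeartbeats 1000000 in
/-- Scalar core of the rate–WMMSE equivalence: the infimum over `u ∈ ℂ` and
`w > 0` of `w * e(u) - log w` equals `1 - log (1 + SINR)`, attained at the
MMSE receiver `u* = √p * conj c / D` and weight `w* = 1 / e(u*)`. -/
theorem rate_wmmse_equivalence (c : ℂ) (p I n : ℝ)
    (hp : 0 ≤ p) (hI : 0 ≤ I) (hn : 0 < n) :
    let D : ℝ := ‖c‖ ^ 2 * p + I + n
    let SINR : ℝ := ‖c‖ ^ 2 * p / (I + n)
    let e : ℂ → ℝ := fun u => D * ‖u‖ ^ 2 - 2 * Real.sqrt p * (u * c).re + 1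
    let ustar : ℂ := (Real.sqrt p : ℂ) * (starRingEnd ℂ) c / (D : ℂ)
    (∀ (u : ℂ) (w : ℝ), 0 < w →
        1 - Real.log (1 + SINR) ≤ w * e u - Real.log w) ∧
    (1 / e ustar) * e ustar - Real.log (1 / e ustar) = 1 - Real.log (1 + SINR) := by
  intro D SINR e ustar
  have hDdef : D = ‖c‖ ^ 2 * p + I + n := rfl
  have hSINRdef : SINR = ‖c‖ ^ 2 * p / (I + n) := rfl
  have hedef : ∀ u : ℂ, e u = D * ‖u‖ ^ 2 - 2 * Real.sqrt p * (u * c).re + 1 :=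
    fun _ => rfl
  have hustardef : ustar = (Real.sqrt p : ℂ) * (starRingEnd ℂ) c / (D : ℂ) := rfl
  clear_value D SINR e ustar
  have hs : Real.sqrt p ^ 2 = p := Real.sq_sqrt hp
  have hca : ‖c‖ ^ 2 = c.re ^ 2 + c.im ^ 2 := by
    rw [Complex.sq_norm, Complex.normSq_apply]; ring
  have hD : 0 < D := by
    have : 0 ≤ ‖c‖ ^ 2 * p := by positivity
    rw [hDdef]; linarith
  have hIn : 0 < I + n := by linarith
  have hustar_re : ustar.re = Real.sqrt p / D * c.re := by
    rw [hustardef, Complex.div_re]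
    simp [Complex.normSq_ofReal, Complex.mul_re, Complex.mul_im]
    field_simp
  have hustar_im : ustar.im = -(Real.sqrt p / D * c.im) := by
    rw [hustardef, Complex.div_im]
    simp [Complex.normSq_ofReal, Complex.mul_re, Complex.mul_im]
    field_simp
  have key : ∀ u : ℂ, e u = D * Complex.normSq (u - ustar) + (I + n) / D := by
    intro u
    have hD2 : D = (c.re ^ 2 + c.im ^ 2) * p + I + n := by rw [hDdef, hca]
    rw [hedef, Complex.sq_norm]
    simp only [Complex.normSq_apply, Complex.sub_re, Complex.sub_im,
      Complex.mul_re, hustar_re, hustar_im]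
    have hDne : D ≠ 0 := ne_of_gt hD
    field_simp
    linear_combination hD2 - (c.re ^ 2 + c.im ^ 2) * hs
  have hestar : e ustar = (I + n) / D := by
    rw [key ustar]; simp
  have hlog : Real.log ((I + n) / D) = -Real.log (1 + SINR) := by
    have h1 : 1 + SINR = D / (I + n) := by
      rw [hSINRdef, hDdef]; field_simp; ring
    rw [h1, ← Real.log_inv, inv_div]
  constructor
  · intro u w hw
    have h1 : (I + n) / D ≤ e u := by
      have h0 := mul_nonneg hD.le (Complex.normSq_nonneg (u - ustar))
      rw [key u]; linarith
    have hepos : 0 < (I + n) / D := div_pos hIn hD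
    have h2 : Real.log (w * ((I + n) / D)) ≤ w * ((I + n) / D) - 1 :=
      Real.log_le_sub_one_of_pos (by positivity)
    rw [Real.log_mul (ne_of_gt hw) (ne_of_gt hepos), hlog] at h2
    have h3 := mul_le_mul_of_nonneg_left h1 hw.le
    linarith
  · have hepos : 0 < e ustar := by rw [hestar]; exact div_pos hIn hD
    rw [one_div, inv_mul_cancel₀ (ne_of_gt hepos), Real.log_inv, hestar, hlog]
    ring
end
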